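/- For every d-regular graph G = (V,E) with n vertices and m = nd/2 edges, and for every assignment of labels y : E → {+1, -1}, there exists an embedding x : V → ℝ^d such that for every edge (a,b) with label y, we have y · ⟨x_a, x_b⟩ > 1. -/

import Mathlib

/-!
Place the vertices one at a time. When `v` is placed, the already placed neighbours of `v` have
linearly independent vectors, so any prescribed inner products with them, in particular
`2 / y v u`, can be realised; the vectors realising margin `> 1` form a nonempty open set.
Every neighbour `w` of `v` has at most `d - 1` other neighbours, whose vectors span a proper
subspace, and an open set is not covered by finitely many proper subspaces. Choosing the vector
of `v` outside all of them keeps the placed neighbours of every unplaced vertex linearly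
independent.
-/

open scoped RealInnerProductSpace
open Set Submodule Module

theorem LinearIndependent.exists_inner_eq {E : Type*} [NormedAddCommGroup E]
    [InnerProductSpace ℝ E] {ι : Type*} [Finite ι] {f : ι → E}
    (hf : LinearIndependent ℝ f) (c : ι → ℝ) : ∃ p : E, ∀ i, ⟪f i, p⟫ = c i := by
  have : FiniteDimensional ℝ (span ℝ (range f)) := .span_of_finite ℝ (finite_range f)
  have := FiniteDimensional.complete ℝ (span ℝ (range f))
  let b := Basis.span hf
  let φ : StrongDual ℝ (span ℝ (range f)) := LinearMap.toContinuousLinearMap (b.constr ℝ c)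
  refine ⟨(InnerProductSpace.toDual ℝ (span ℝ (range f))).symm φ, fun i => ?_⟩
  have hfi : f i = (b i : E) := (Basis.coe_span_apply hf i).symm
  rw [real_inner_comm, hfi, ← Submodule.coe_inner, InnerProductSpace.toDual_symm_apply]
  simp [φ]

theorem Submodule.dense_compl_of_ne_top {E : Type*} [AddCommGroup E] [Module ℝ E]
    [TopologicalSpace E] [ContinuousAdd E] [ContinuousSMul ℝ E] {B : Submodule ℝ E}
    (hB : B ≠ ⊤) : Dense (B : Set E)ᶜ := by
  rw [← interior_eq_empty_iff_dense_compl, ← not_nonempty_iff_eq_empty]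
  exact fun h => hB (B.eq_top_of_nonempty_interior' h)

theorem IsOpen.exists_mem_forall_notMem_submodule {E : Type*} [NormedAddCommGroup E]
    [NormedSpace ℝ E] [FiniteDimensional ℝ E] {ι : Type*} [Countable ι] {O : Set E}
    (hO : IsOpen O) (hne : O.Nonempty) {B : ι → Submodule ℝ E} (hB : ∀ i, B i ≠ ⊤) :
    ∃ p ∈ O, ∀ i, p ∉ B i := by
  have := FiniteDimensional.complete ℝ E
  have hdense : Dense (⋂ i, (B i : Set E)ᶜ) :=
    dense_iInter_of_isOpen (fun i => (B i).closed_of_finiteDimensional.isOpen_compl)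
      (fun i => dense_compl_of_ne_top (hB i))
  obtain ⟨p, hpO, hp⟩ := hdense.inter_open_nonempty O hO hne
  exact ⟨p, hpO, mem_iInter.1 hp⟩

namespace SimpleGraph

variable {V E : Type*} [NormedAddCommGroup E] [InnerProductSpace ℝ E]
  (G : SimpleGraph V) (y : V → V → ℝ)

/-- `S` is the set of vertices placed so far. -/
def IsPartialFit (S : Set V) (x : V → E) : Prop :=
  (∀ a ∈ S, ∀ b ∈ S, G.Adj a b → 1 < y a b * ⟪x a, x b⟫) ∧
    ∀ w ∉ S, LinearIndepOn ℝ x (G.neighborSet w ∩ S)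

variable {G y}

theorem isPartialFit_empty (x : V → E) : G.IsPartialFit y ∅ x :=
  ⟨fun _ h => h.elim, fun _ _ => by simp⟩

theorem IsPartialFit.update_insert [DecidableEq V] {S : Set V} {x : V → E} {v : V} {p : E}
    (hx : G.IsPartialFit y S x) (hv : v ∉ S) (hsym : ∀ a b, y a b = y b a)
    (hmargin : ∀ u ∈ G.neighborSet v ∩ S, 1 < y v u * ⟪x u, p⟫)
    (hfresh : ∀ w, G.Adj w v → p ∉ span ℝ (x '' (G.neighborSet w ∩ S))) :
    G.IsPartialFit y (insert v S) (Function.update x v p) := by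
  have hxS : EqOn (Function.update x v p) x S := fun u hu =>
    Function.update_of_ne (ne_of_mem_of_not_mem hu hv) _ _
  constructor
  · rintro a (rfl | ha) b (rfl | hb) hab
    · exact absurd hab G.irrefl
    · rw [Function.update_self, hxS hb, real_inner_comm]
      exact hmargin b ⟨hab, hb⟩
    · rw [Function.update_self, hxS ha, hsym]
      exact hmargin a ⟨hab.symm, ha⟩
    · rw [hxS ha, hxS hb]
      exact hx.1 a ha b hb hab
  · intro w hw
    rw [mem_insert_iff, not_or] at hw
    have hxN : EqOn (Function.update x v p) x (G.neighborSet w ∩ S) :=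
      hxS.mono inter_subset_right
    have hind : LinearIndepOn ℝ (Function.update x v p) (G.neighborSet w ∩ S) :=
      (hx.2 w hw.2).congr hxN.symm
    by_cases hwv : G.Adj w v
    · rw [inter_insert_of_mem (show v ∈ G.neighborSet w from hwv),
        linearIndepOn_insert fun h => hv h.2]
      refine ⟨hind, ?_⟩
      rw [Function.update_self, hxN.image_eq]
      exact hfresh w hwv
    · rwa [inter_insert_of_notMem (show v ∉ G.neighborSet w from hwv)]

theorem span_image_neighborSet_diff_ne_top [G.LocallyFinite] [FiniteDimensional ℝ E] (x : V → E)
    {v w : V} (hwv : G.Adj w v) (hdeg : G.degree w ≤ finrank ℝ E) :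
    span ℝ (x '' (G.neighborSet w \ {v})) ≠ ⊤ := by
  classical
  have hset : G.neighborSet w \ {v} = ↑((G.neighborFinset w).erase v) := by ext; simp
  rw [hset, ← Finset.coe_image]
  refine (span_lt_top_of_card_lt_finrank ?_).ne
  calc (↑(((G.neighborFinset w).erase v).image x) : Set E).toFinset.card
      ≤ ((G.neighborFinset w).erase v).card := by
        rw [Finset.toFinset_coe]
        exact Finset.card_image_le
    _ < G.degree w := by
      rw [← card_neighborFinset_eq_degree]
      exact Finset.card_erase_lt_of_mem ((mem_neighborFinset _ _ _).2 hwv)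
    _ ≤ finrank ℝ E := hdeg

theorem IsPartialFit.exists_insert [DecidableEq V] [G.LocallyFinite] [FiniteDimensional ℝ E]
    {S : Set V} {x : V → E} {v : V} (hx : G.IsPartialFit y S x) (hv : v ∉ S)
    (hdeg : ∀ w, G.degree w ≤ finrank ℝ E) (hsym : ∀ a b, y a b = y b a)
    (hy : ∀ a b, G.Adj a b → y a b ≠ 0) :
    ∃ p : E, G.IsPartialFit y (insert v S) (Function.update x v p) := by
  have hNS : (G.neighborSet v ∩ S).Finite := (G.neighborSet v).toFinite.inter_of_left S
  have := hNS.to_subtype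
  obtain ⟨p₀, hp₀⟩ := (hx.2 v hv).exists_inner_eq (fun u => 2 / y v u)
  let O : Set E := ⋂ u ∈ G.neighborSet v ∩ S, {p | 1 < y v u * ⟪x u, p⟫}
  have hO : IsOpen O := hNS.isOpen_biInter fun u _ =>
    isOpen_lt continuous_const (continuous_const.mul (continuous_const.inner continuous_id))
  have hp₀O : p₀ ∈ O := mem_iInter₂.2 fun u hu => by
    show (1 : ℝ) < _
    rw [hp₀ ⟨u, hu⟩, mul_div_cancel₀ _ (hy v u hu.1)]
    norm_num
  obtain ⟨p, hpO, hpB⟩ := hO.exists_mem_forall_notMem_submodule ⟨p₀, hp₀O⟩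
    (B := fun w : G.neighborSet v => span ℝ (x '' (G.neighborSet w \ {v})))
    fun w => span_image_neighborSet_diff_ne_top x w.2.symm (hdeg w)
  have hplaced (w : V) : G.neighborSet w ∩ S ⊆ G.neighborSet w \ {v} :=
    fun u hu => ⟨hu.1, fun h => hv (mem_singleton_iff.1 h ▸ hu.2)⟩
  exact ⟨p, hx.update_insert hv hsym (mem_iInter₂.1 hpO) fun w hwv hp =>
    hpB ⟨w, hwv.symm⟩ (span_mono (image_mono (hplaced w)) hp)⟩

theorem exists_one_lt_mul_inner_of_degree_le_finrank [Finite V] [G.LocallyFinite]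
    [FiniteDimensional ℝ E] (hdeg : ∀ w, G.degree w ≤ finrank ℝ E)
    (hsym : ∀ a b, y a b = y b a) (hy : ∀ a b, G.Adj a b → y a b ≠ 0) :
    ∃ x : V → E, ∀ a b, G.Adj a b → 1 < y a b * ⟪x a, x b⟫ := by
  classical
  have hfit (S : Set V) (hS : S.Finite) : ∃ x : V → E, G.IsPartialFit y S x := by
    induction S, hS using Set.Finite.induction_on with
    | empty => exact ⟨0, isPartialFit_empty 0⟩
    | insert hv _ ih =>
      obtain ⟨x, hx⟩ := ih
      obtain ⟨p, hp⟩ := hx.exists_insert hv hdeg hsym hy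
      exact ⟨_, hp⟩
  obtain ⟨x, hx⟩ := hfit univ finite_univ
  exact ⟨x, fun a b => hx.1 a (mem_univ a) b (mem_univ b)⟩

end SimpleGraph

/-- For every `d`-regular graph `G` on a finite vertex set `V` and every
assignment of labels `y : V → V → ℝ` taking values `±1` on edges (symmetrically),
there exists a `d`-dimensional embedding achieving margin `1` on every labeled edge. -/
theorem dRegular_perfect_fit {V : Type*} [Fintype V] (d : ℕ)
    (G : SimpleGraph V) [DecidableRel G.Adj] (hreg : G.IsRegularOfDegree d)
    (y : V → V → ℝ)
    (hsym : ∀ a b, y a b = y b a)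
    (hpm : ∀ a b, G.Adj a b → y a b = 1 ∨ y a b = -1) :
    ∃ x : V → EuclideanSpace ℝ (Fin d),
      ∀ a b, G.Adj a b → y a b * ⟪x a, x b⟫ > 1 := by
  have hdeg (v : V) : G.degree v ≤ finrank ℝ (EuclideanSpace ℝ (Fin d)) := by
    rw [hreg v, finrank_euclideanSpace_fin]
  have hy (a b : V) (hab : G.Adj a b) : y a b ≠ 0 := by
    rcases hpm a b hab with h | h <;> simp [h]
  exact G.exists_one_lt_mul_inner_of_degree_le_finrank hdeg hsym hy
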